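/- (Proposition 1, identification) Suppose in the six-arm trial T_VI: (i) A and M are jointly randomized, i.e. (A,M) is independent of all potential outcomes (Y^{a,m}, B^{a,m}) given L; (ii) consistency holds: A=a, M=m imply Y=Y^{a,m} and B=B^{a,m}; (iii) belief determinism: B^{a,m} = m almost surely for m ∈ {0,1}; (iv) dismissible component condition: Y ⊥ M | L, A, B; (v) positivity: P(B=b | L=l, A=a, M=−1) > 0 for all b ∈ {0,1}, all a and all l with P(L=l)>0; and P(A=a, M=m | L=l) > 0 for all a ∈ {0,1}, m ∈ {−1,0,1}. Then for a,m ∈ {0,1}, E[Y^{a,m}] = Σ_l E[Y | L=l, A=a, B=m, M=−1] · P(L=l), i.e. the mean counterfactual outcome is identified from the two-arm (M=−1) data. -/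

import Mathlib

/-!
Fix a stratum `L = l`. Randomization lets one condition additionally on the arm
`A = a, M = m` without changing the law of `Y^{a,m}`, and consistency then replaces `Y^{a,m}`
by `Y` on that arm. Belief determinism makes the arm almost surely equal to the event
`L = l, A = a, B = m, M = m`, i.e. to `M = m` inside the fibre `(L, A, B) = (l, a, m)`. On that
fibre the dismissible component condition makes `Y` independent of `M`, so the message `m` may
be replaced by the reference value `-1`. Averaging over `L` gives the formula.

Conditional independence given a discrete `W` is used through plain independence under each
conditional measure `μ[|W ⁻¹' {w}]`: a conditional expectation given `W` factors through `W`,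
so it is constant on each fibre, where it equals the corresponding conditional mean.
-/

open MeasureTheory ProbabilityTheory

namespace ProbabilityTheory

variable {Ω β γ δ : Type*} {mΩ : MeasurableSpace Ω} {mβ : MeasurableSpace β}
  {mγ : MeasurableSpace γ} {mδ : MeasurableSpace δ} {μ : Measure Ω} {W : Ω → β}

theorem integral_cond_mul_measureReal [IsFiniteMeasure μ] (f : Ω → ℝ) (s : Set Ω) :
    (∫ x, f x ∂μ[|s]) * μ.real s = ∫ x in s, f x ∂μ := by
  rcases eq_or_ne (μ s) 0 with hs | hs
  · simp [Measure.restrict_eq_zero.2 hs, measureReal_def, hs]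
  have : μ.real s ≠ 0 := (measureReal_ne_zero_iff (by finiteness)).2 hs
  rw [cond, integral_smul_measure, ENNReal.toReal_inv, ← measureReal_def, smul_eq_mul]
  field_simp

theorem integral_eq_tsum_integral_cond_mul [MeasurableSingletonClass β] [Countable β]
    [IsFiniteMeasure μ] (hW : Measurable W) {f : Ω → ℝ} (hf : Integrable f μ) :
    ∫ x, f x ∂μ = ∑' b, (∫ x, f x ∂μ[|W ⁻¹' {b}]) * μ.real (W ⁻¹' {b}) := by
  simp_rw [integral_cond_mul_measureReal f]
  rw [← integral_iUnion (fun b ↦ hW (measurableSet_singleton b))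
    (fun b c hbc ↦ Set.disjoint_singleton.2 hbc |>.preimage W) hf.integrableOn,
    ← Set.preimage_iUnion, Set.iUnion_of_singleton, Set.preimage_univ, setIntegral_univ]

theorem cond_congr_ae {s t : Set Ω} (h : s =ᵐ[μ] t) : μ[|s] = μ[|t] := by
  rw [cond, cond, measure_congr h, Measure.restrict_congr_set h]

theorem IndepFun.map_cond_preimage_eq [IsFiniteMeasure μ] {X : Ω → γ} {Z : Ω → δ}
    (hXZ : IndepFun X Z μ) (hX : Measurable X) (hZ : Measurable Z) {S : Set γ}
    (hS : MeasurableSet S) (hμS : μ (X ⁻¹' S) ≠ 0) :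
    (μ[|X ⁻¹' S]).map Z = μ.map Z := by
  ext T hT
  rw [Measure.map_apply hZ hT, Measure.map_apply hZ hT, cond_apply (hX hS),
    hXZ.measure_inter_preimage_eq_mul S T hS hT, ENNReal.inv_mul_cancel_left hμS (by finiteness)]

variable [MeasurableSingletonClass β]

theorem condExp_comap_ae_eq_integral_cond [IsFiniteMeasure μ] (hW : Measurable W) {f : Ω → ℝ}
    (hf : Integrable f μ) (w : β) :
    μ[f | mβ.comap W] =ᵐ[μ.restrict (W ⁻¹' {w})] fun _ ↦ ∫ x, f x ∂μ[|W ⁻¹' {w}] := by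
  set F := W ⁻¹' {w}
  have hF : MeasurableSet F := hW (measurableSet_singleton w)
  rcases eq_or_ne (μ F) 0 with hμF | hμF
  · simp [Measure.restrict_eq_zero.2 hμF, Filter.EventuallyEq]
  obtain ⟨ω₀, hω₀⟩ := nonempty_of_measure_ne_zero hμF
  have hconst : ∀ ω ∈ F, μ[f | mβ.comap W] ω = μ[f | mβ.comap W] ω₀ := fun ω hω ↦
    stronglyMeasurable_condExp.factorsThrough (hω.trans hω₀.symm)
  have hval : μ[f | mβ.comap W] ω₀ * μ.real F = ∫ x in F, f x ∂μ := by
    rw [← setIntegral_condExp hW.comap_le hf ⟨{w}, measurableSet_singleton w, rfl⟩,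
      setIntegral_congr_fun hF hconst, setIntegral_const, smul_eq_mul, mul_comm]
  refine ae_restrict_of_forall_mem hF fun ω hω ↦ ?_
  have : μ.real F ≠ 0 := (measureReal_ne_zero_iff (by finiteness)).2 hμF
  rw [hconst ω hω, ← mul_left_inj' this, hval, integral_cond_mul_measureReal]

theorem condExp_set_comap_ae_eq_cond [IsFiniteMeasure μ] (hW : Measurable W) {s : Set Ω}
    (hs : MeasurableSet s) (w : β) :
    μ⟦s | mβ.comap W⟧ =ᵐ[μ.restrict (W ⁻¹' {w})] fun _ ↦ μ[|W ⁻¹' {w}].real s := by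
  rw [← integral_indicator_one hs]
  exact condExp_comap_ae_eq_integral_cond hW ((integrable_const 1).indicator hs) w

theorem CondIndepFun.indepFun_cond_preimage_singleton [StandardBorelSpace Ω] [IsFiniteMeasure μ]
    {X : Ω → γ} {Z : Ω → δ} (hW : Measurable W) (hX : Measurable X) (hZ : Measurable Z)
    (h : CondIndepFun (mβ.comap W) hW.comap_le X Z μ) (w : β) :
    IndepFun X Z μ[|W ⁻¹' {w}] := by
  rw [indepFun_iff_measure_inter_preimage_eq_mul]
  intro S T hS hT
  rcases eq_or_ne (μ (W ⁻¹' {w})) 0 with hμF | hμF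
  · simp [cond_eq_zero_of_meas_eq_zero hμF]
  have : (ae (μ.restrict (W ⁻¹' {w}))).NeBot := ae_neBot.2 (by simpa using hμF)
  have hprod := (condIndepFun_iff_condExp_inter_preimage_eq_mul hX hZ).1 h S T hS hT
  have hXZ := condExp_set_comap_ae_eq_cond (μ := μ) hW ((hX hS).inter (hZ hT)) w
  have hX' := condExp_set_comap_ae_eq_cond (μ := μ) hW (hX hS) w
  have hZ' := condExp_set_comap_ae_eq_cond (μ := μ) hW (hZ hT) w
  obtain ⟨ω, hω, hωXZ, hωX, hωZ⟩ :=
    ((ae_restrict_of_ae hprod).and (hXZ.and (hX'.and hZ'))).exists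
  dsimp only at hω hωXZ hωX hωZ
  rw [hωXZ, hωX, hωZ, measureReal_def, measureReal_def, measureReal_def,
    ← ENNReal.toReal_mul] at hω
  exact (ENNReal.toReal_eq_toReal_iff' (by finiteness) (by finiteness)).1 hω

theorem CondIndepFun.integral_cond_inter_preimage_singleton [StandardBorelSpace Ω]
    [IsFiniteMeasure μ] {X : Ω → γ} {Z : Ω → ℝ} (hW : Measurable W) (hX : Measurable X)
    (hZ : Measurable Z) (h : CondIndepFun (mβ.comap W) hW.comap_le X Z μ) {S : Set γ}
    (hS : MeasurableSet S) {w : β} (hpos : μ (X ⁻¹' S ∩ W ⁻¹' {w}) ≠ 0) :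
    ∫ x, Z x ∂μ[|X ⁻¹' S ∩ W ⁻¹' {w}] = ∫ x, Z x ∂μ[|W ⁻¹' {w}] := by
  have hF : MeasurableSet (W ⁻¹' {w}) := hW (measurableSet_singleton w)
  have hpos' : μ[|W ⁻¹' {w}] (X ⁻¹' S) ≠ 0 :=
    (cond_pos_of_inter_ne_zero hF (by rwa [Set.inter_comm])).ne'
  rw [Set.inter_comm, ← cond_cond_eq_cond_inter hF (hX hS)]
  calc ∫ x, Z x ∂μ[|W ⁻¹' {w}][|X ⁻¹' S]
      = ∫ z, z ∂(μ[|W ⁻¹' {w}][|X ⁻¹' S]).map Z :=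
        (integral_map hZ.aemeasurable aestronglyMeasurable_id).symm
    _ = ∫ z, z ∂(μ[|W ⁻¹' {w}]).map Z := by
        rw [(h.indepFun_cond_preimage_singleton hW hX hZ w).map_cond_preimage_eq hX hZ hS hpos']
    _ = ∫ x, Z x ∂μ[|W ⁻¹' {w}] := integral_map hZ.aemeasurable aestronglyMeasurable_id

end ProbabilityTheory

theorem integral_potentialOutcome_cond_eq_integral_cond_referenceArm
    {Ω α κ ι : Type*} [MeasurableSpace Ω] [StandardBorelSpace Ω] {μ : Measure Ω}
    [IsFiniteMeasure μ] [MeasurableSpace α] [MeasurableSingletonClass α] [MeasurableSpace κ]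
    [MeasurableSingletonClass κ] [MeasurableSpace ι] [MeasurableSingletonClass ι]
    {A : Ω → α} {M B Bam : Ω → κ} {L : Ω → ι} {Y Yam : Ω → ℝ} {a : α} {m m₀ : κ} {l : ι}
    (hA : Measurable A) (hM : Measurable M) (hB : Measurable B) (hL : Measurable L)
    (hY : Measurable Y) (hYam : Measurable Yam)
    (hrand : CondIndepFun (MeasurableSpace.comap L inferInstance) hL.comap_le
      (fun ω ↦ (A ω, M ω)) Yam μ)
    (hcons : ∀ ω, A ω = a → M ω = m → Y ω = Yam ω ∧ B ω = Bam ω)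
    (hdet : ∀ᵐ ω ∂μ, Bam ω = m)
    (hdcc : CondIndepFun (MeasurableSpace.comap (fun ω ↦ (L ω, A ω, B ω)) inferInstance)
      (hL.prodMk (hA.prodMk hB)).comap_le Y M μ)
    (hposAM : μ {ω | A ω = a ∧ M ω = m ∧ L ω = l} ≠ 0)
    (hposB : μ {ω | L ω = l ∧ A ω = a ∧ B ω = m ∧ M ω = m₀} ≠ 0) :
    ∫ ω, Yam ω ∂μ[|L ⁻¹' {l}] =
      ∫ ω, Y ω ∂μ[|{ω | L ω = l ∧ A ω = a ∧ B ω = m ∧ M ω = m₀}] := by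
  have hW : Measurable fun ω ↦ (L ω, A ω, B ω) := hL.prodMk (hA.prodMk hB)
  have hAM : Measurable fun ω ↦ (A ω, M ω) := hA.prodMk hM
  set F := (fun ω ↦ (L ω, A ω, B ω)) ⁻¹' {(l, a, m)}
  set arm := (fun ω ↦ (A ω, M ω)) ⁻¹' {(a, m)} ∩ L ⁻¹' {l}
  have harm_meas : MeasurableSet arm :=
    (hAM (measurableSet_singleton _)).inter (hL (measurableSet_singleton _))
  have hposarm : μ arm ≠ 0 := by
    convert hposAM using 2
    ext ω
    simp [arm, Prod.ext_iff, and_assoc]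
  have hbelief : arm =ᵐ[μ] (M ⁻¹' {m} ∩ F : Set Ω) := by
    filter_upwards [hdet] with ω hω
    change (ω ∈ arm) = (ω ∈ M ⁻¹' {m} ∩ F)
    simp only [arm, F, Set.mem_inter_iff, Set.mem_preimage, Set.mem_singleton_iff,
      Prod.mk.injEq, eq_iff_iff]
    exact ⟨fun ⟨⟨hωA, hωM⟩, hωL⟩ ↦ ⟨hωM, hωL, hωA, (hcons ω hωA hωM).2.trans hω⟩,
      fun ⟨hωM, hωL, hωA, _⟩ ↦ ⟨⟨hωA, hωM⟩, hωL⟩⟩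
  have hreference : {ω | L ω = l ∧ A ω = a ∧ B ω = m ∧ M ω = m₀} = M ⁻¹' {m₀} ∩ F := by
    ext ω
    simp only [F, Set.mem_ofPred_eq, Set.mem_inter_iff, Set.mem_preimage,
      Set.mem_singleton_iff, Prod.ext_iff]
    tauto
  calc ∫ ω, Yam ω ∂μ[|L ⁻¹' {l}]
      = ∫ ω, Yam ω ∂μ[|arm] :=
        (hrand.integral_cond_inter_preimage_singleton hL hAM hYam (measurableSet_singleton _)
          hposarm).symm
    _ = ∫ ω, Y ω ∂μ[|arm] := integral_congr_ae <| ae_cond_of_forall_mem harm_meas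
        fun ω ⟨hωAM, _⟩ ↦ (hcons ω (congrArg Prod.fst hωAM) (congrArg Prod.snd hωAM)).1.symm
    _ = ∫ ω, Y ω ∂μ[|M ⁻¹' {m} ∩ F] := by rw [cond_congr_ae hbelief]
    _ = ∫ ω, Y ω ∂μ[|F] :=
        hdcc.symm.integral_cond_inter_preimage_singleton hW hM hY (measurableSet_singleton _)
          (measure_congr hbelief ▸ hposarm)
    _ = ∫ ω, Y ω ∂μ[|M ⁻¹' {m₀} ∩ F] :=
        (hdcc.symm.integral_cond_inter_preimage_singleton hW hM hY (measurableSet_singleton _)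
          (hreference ▸ hposB)).symm
    _ = _ := by rw [hreference]

theorem proposition_one_identification_general
    {Ω : Type*} [mΩ : MeasurableSpace Ω] [StandardBorelSpace Ω]
    (μ : Measure Ω) [IsProbabilityMeasure μ]
    (A M B : Ω → ℤ) (L : Ω → ℕ) (Y : Ω → ℝ)
    (Y' : ℤ → ℤ → Ω → ℝ) (B' : ℤ → ℤ → Ω → ℤ)
    (hA : Measurable A) (hM : Measurable M) (hB : Measurable B) (hL : Measurable L)
    (hY : Measurable Y) (hY' : ∀ a m, Measurable (Y' a m))
    (hY'bd : ∀ a m, ∃ C, ∀ ω, |Y' a m ω| ≤ C)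
    -- (i) randomization: `(A,M)` ⟂ (all potential outcomes) | `L`
    (hrand : CondIndepFun (MeasurableSpace.comap L inferInstance) hL.comap_le
      (fun ω => (A ω, M ω))
      (fun ω => fun p : ℤ × ℤ => (Y' p.1 p.2 ω, B' p.1 p.2 ω)) μ)
    -- (ii) consistency
    (hcons : ∀ (a m : ℤ) (ω : Ω), A ω = a → M ω = m →
      Y ω = Y' a m ω ∧ B ω = B' a m ω)
    -- (iii) belief determinism
    (hdet : ∀ a m : ℤ, (a = 0 ∨ a = 1) → (m = 0 ∨ m = 1) →
      ∀ᵐ ω ∂μ, B' a m ω = m)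
    -- (iv) dismissible component condition: `Y ⟂ M | L, A, B`
    (hdcc : CondIndepFun
      (MeasurableSpace.comap (fun ω => (L ω, A ω, B ω)) inferInstance)
      (((hL.prodMk (hA.prodMk hB)).comap_le)) Y M μ)
    -- (v) positivity
    (hposB : ∀ (b a : ℤ), (b = 0 ∨ b = 1) → (a = 0 ∨ a = 1) → ∀ l : ℕ,
      μ {ω | L ω = l} ≠ 0 →
      μ {ω | B ω = b ∧ L ω = l ∧ A ω = a ∧ M ω = -1} ≠ 0)
    (hposAM : ∀ (a m : ℤ), (a = 0 ∨ a = 1) → (m = -1 ∨ m = 0 ∨ m = 1) → ∀ l : ℕ,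
      μ {ω | L ω = l} ≠ 0 → μ {ω | A ω = a ∧ M ω = m ∧ L ω = l} ≠ 0) :
    ∀ a m : ℤ, (a = 0 ∨ a = 1) → (m = 0 ∨ m = 1) →
      (∫ ω, Y' a m ω ∂μ) =
        ∑' l : ℕ,
          (∫ ω, Y ω ∂(μ[|{ω | L ω = l ∧ A ω = a ∧ B ω = m ∧ M ω = -1}]))
            * (μ {ω | L ω = l}).toReal := by
  intro a m ha hm
  obtain ⟨C, hC⟩ := hY'bd a m
  have hint : Integrable (Y' a m) μ :=
    .of_bound (hY' a m).aestronglyMeasurable C (ae_of_all _ hC)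
  have hrand_am : CondIndepFun (MeasurableSpace.comap L inferInstance) hL.comap_le
      (fun ω ↦ (A ω, M ω)) (Y' a m) μ :=
    hrand.comp (ψ := fun f : ℤ × ℤ → ℝ × ℤ ↦ (f (a, m)).1) measurable_id
      (measurable_pi_apply (a, m)).fst
  rw [integral_eq_tsum_integral_cond_mul hL hint]
  refine tsum_congr fun l ↦ ?_
  rcases eq_or_ne (μ {ω | L ω = l}) 0 with hl | hl
  · simp [measureReal_def, Set.preimage, hl]
  have hposB' : μ {ω | L ω = l ∧ A ω = a ∧ B ω = m ∧ M ω = -1} ≠ 0 := by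
    convert hposB m a hm ha l hl using 2
    ext ω
    exact ⟨fun ⟨hωL, hωA, hωB, hωM⟩ ↦ ⟨hωB, hωL, hωA, hωM⟩,
      fun ⟨hωB, hωL, hωA, hωM⟩ ↦ ⟨hωL, hωA, hωB, hωM⟩⟩
  congr 1
  exact integral_potentialOutcome_cond_eq_integral_cond_referenceArm hA hM hB hL hY (hY' a m)
    hrand_am (hcons a m) (hdet a m ha hm) hdcc (hposAM a m ha (.inr hm) l hl) hposB'

/-- Proposition 1 (identification): in the six-arm trial `T_VI`, suppose
(i) `(A,M)` is jointly randomized: conditionally independent of all potential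
outcomes `(Y^{a,m}, B^{a,m})` given `L`; (ii) consistency; (iii) belief determinism
`B^{a,m} = m` a.s. for `m ∈ {0,1}`; (iv) dismissible component condition
`Y ⟂ M | L, A, B`; and (v) positivity. Then for `a, m ∈ {0,1}`,
`E[Y^{a,m}] = Σ_l E[Y | L=l, A=a, B=m, M=−1] · P(L=l)`: the mean counterfactual is
identified from the two-arm (`M = −1`) data. -/
theorem proposition_one_identification
    {Ω : Type*} [mΩ : MeasurableSpace Ω] [StandardBorelSpace Ω] [Nonempty Ω]
    (μ : Measure Ω) [IsProbabilityMeasure μ]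
    (A M B : Ω → ℤ) (L : Ω → ℕ) (Y : Ω → ℝ)
    (Y' : ℤ → ℤ → Ω → ℝ) (B' : ℤ → ℤ → Ω → ℤ)
    (hA : Measurable A) (hM : Measurable M) (hB : Measurable B) (hL : Measurable L)
    (hY : Measurable Y) (hY' : ∀ a m, Measurable (Y' a m))
    (hB' : ∀ a m, Measurable (B' a m))
    (hYbd : ∃ C, ∀ ω, |Y ω| ≤ C) (hY'bd : ∀ a m, ∃ C, ∀ ω, |Y' a m ω| ≤ C)
    -- (i) randomization: `(A,M)` ⟂ (all potential outcomes) | `L`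
    (hrand : CondIndepFun (MeasurableSpace.comap L inferInstance) hL.comap_le
      (fun ω => (A ω, M ω))
      (fun ω => fun p : ℤ × ℤ => (Y' p.1 p.2 ω, B' p.1 p.2 ω)) μ)
    -- (ii) consistency
    (hcons : ∀ (a m : ℤ) (ω : Ω), A ω = a → M ω = m →
      Y ω = Y' a m ω ∧ B ω = B' a m ω)
    -- (iii) belief determinism
    (hdet : ∀ a m : ℤ, (a = 0 ∨ a = 1) → (m = 0 ∨ m = 1) →
      ∀ᵐ ω ∂μ, B' a m ω = m)
    -- (iv) dismissible component condition: `Y ⟂ M | L, A, B`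
    (hdcc : CondIndepFun
      (MeasurableSpace.comap (fun ω => (L ω, A ω, B ω)) inferInstance)
      (((hL.prodMk (hA.prodMk hB)).comap_le)) Y M μ)
    -- (v) positivity
    (hposB : ∀ (b a : ℤ), (b = 0 ∨ b = 1) → (a = 0 ∨ a = 1) → ∀ l : ℕ,
      μ {ω | L ω = l} ≠ 0 →
      μ {ω | B ω = b ∧ L ω = l ∧ A ω = a ∧ M ω = -1} ≠ 0)
    (hposAM : ∀ (a m : ℤ), (a = 0 ∨ a = 1) → (m = -1 ∨ m = 0 ∨ m = 1) → ∀ l : ℕ,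
      μ {ω | L ω = l} ≠ 0 → μ {ω | A ω = a ∧ M ω = m ∧ L ω = l} ≠ 0) :
    ∀ a m : ℤ, (a = 0 ∨ a = 1) → (m = 0 ∨ m = 1) →
      (∫ ω, Y' a m ω ∂μ) =
        ∑' l : ℕ,
          (∫ ω, Y ω ∂(μ[|{ω | L ω = l ∧ A ω = a ∧ B ω = m ∧ M ω = -1}]))
            * (μ {ω | L ω = l}).toReal :=
  proposition_one_identification_general (mΩ := mΩ) μ A M B L Y Y' B' hA hM hB hL hY hY' hY'bd hrand
    hcons hdet hdcc hposB hposAM
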